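/- Let L > 0 and let A = ∂ₓₓ - ∂ₓₓₓ with domain D(A) = {u ∈ H³(-L,L) : u(-L) = u(L) = uₓ(L) = 0}. Then the adjoint of A in L²(-L,L) is A* = ∂ₓₓ + ∂ₓₓₓ with domain D(A*) = {φ ∈ H³(-L,L) : φ(-L) = φ(L) = φₓ(-L) = 0}, and A* is dissipative: for every φ ∈ D(A*), (A*φ, φ)_{L²} ≤ 0. -/

import Mathlib

/-!
Both claims are integrations of exact derivatives. Lagrange's identity
`(Au) φ - u (A*φ) = P'` holds for the bilinear concomitant
`P = u'φ - uφ' - (u''φ - u'φ' + uφ'')`, and under the two sets of boundary conditions `P`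
reduces to `u'φ'` at `±L`, which vanishes since `u'(L) = 0` and `φ'(-L) = 0`.
For dissipativity, `(A*φ) φ + φ'² = (φ'φ + φ''φ - φ'²/2)'`, so
`(A*φ, φ) = -φ'(L)²/2 - ∫ φ'² ≤ 0`.
-/

open intervalIntegral

theorem ContDiff.hasDerivAt_iteratedDeriv {𝕜 F : Type*} [NontriviallyNormedField 𝕜]
    [NormedAddCommGroup F] [NormedSpace 𝕜 F] {n : WithTop ℕ∞} {f : 𝕜 → F} (hf : ContDiff 𝕜 n f)
    {k : ℕ} (hk : k < n) (x : 𝕜) :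
    HasDerivAt (iteratedDeriv k f) (iteratedDeriv (k + 1) f x) x := by
  rw [iteratedDeriv_succ]
  exact (hf.differentiable_iteratedDeriv k hk x).hasDerivAt

noncomputable def kdvbOp (u : ℝ → ℝ) (x : ℝ) : ℝ := iteratedDeriv 2 u x - iteratedDeriv 3 u x

noncomputable def kdvbAdjointOp (φ : ℝ → ℝ) (x : ℝ) : ℝ :=
  iteratedDeriv 2 φ x + iteratedDeriv 3 φ x

section

variable {u φ : ℝ → ℝ}

@[fun_prop]
theorem ContDiff.continuous_kdvbOp (hu : ContDiff ℝ 3 u) : Continuous (kdvbOp u) :=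
  (hu.continuous_iteratedDeriv 2 (by norm_num)).sub (hu.continuous_iteratedDeriv 3 le_rfl)

@[fun_prop]
theorem ContDiff.continuous_kdvbAdjointOp (hφ : ContDiff ℝ 3 φ) :
    Continuous (kdvbAdjointOp φ) :=
  (hφ.continuous_iteratedDeriv 2 (by norm_num)).add (hφ.continuous_iteratedDeriv 3 le_rfl)

theorem ContDiff.hasDerivAt_iteratedDeriv_zero_one_two (hu : ContDiff ℝ 3 u) (x : ℝ) :
    HasDerivAt u (iteratedDeriv 1 u x) x ∧
      HasDerivAt (iteratedDeriv 1 u) (iteratedDeriv 2 u x) x ∧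
      HasDerivAt (iteratedDeriv 2 u) (iteratedDeriv 3 u x) x :=
  ⟨by simpa using hu.hasDerivAt_iteratedDeriv (k := 0) (by norm_num) x,
    hu.hasDerivAt_iteratedDeriv (k := 1) (by norm_num) x,
    hu.hasDerivAt_iteratedDeriv (k := 2) (by norm_num) x⟩

theorem hasDerivAt_kdvbConcomitant (hu : ContDiff ℝ 3 u) (hφ : ContDiff ℝ 3 φ) (x : ℝ) :
    HasDerivAt
      (fun x => iteratedDeriv 1 u x * φ x - u x * iteratedDeriv 1 φ x -
        (iteratedDeriv 2 u x * φ x - iteratedDeriv 1 u x * iteratedDeriv 1 φ x +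
          u x * iteratedDeriv 2 φ x))
      (kdvbOp u x * φ x - u x * kdvbAdjointOp φ x) x := by
  obtain ⟨u₀, u₁, u₂⟩ := hu.hasDerivAt_iteratedDeriv_zero_one_two x
  obtain ⟨φ₀, φ₁, φ₂⟩ := hφ.hasDerivAt_iteratedDeriv_zero_one_two x
  refine (((u₁.mul φ₀).sub (u₀.mul φ₁)).sub
    (((u₂.mul φ₀).sub (u₁.mul φ₁)).add (u₀.mul φ₂))).congr_deriv ?_
  unfold kdvbOp kdvbAdjointOp
  ring

theorem hasDerivAt_kdvbAdjointEnergy (hφ : ContDiff ℝ 3 φ) (x : ℝ) :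
    HasDerivAt
      (fun x => iteratedDeriv 1 φ x * φ x + iteratedDeriv 2 φ x * φ x -
        iteratedDeriv 1 φ x ^ 2 / 2)
      (kdvbAdjointOp φ x * φ x + iteratedDeriv 1 φ x ^ 2) x := by
  obtain ⟨φ₀, φ₁, φ₂⟩ := hφ.hasDerivAt_iteratedDeriv_zero_one_two x
  refine (((φ₁.mul φ₀).add (φ₂.mul φ₀)).sub ((φ₁.pow 2).div_const 2)).congr_deriv ?_
  unfold kdvbAdjointOp
  ring

theorem integral_kdvbOp_mul_eq_integral_mul_kdvbAdjointOp {a b : ℝ}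
    (hu : ContDiff ℝ 3 u) (hφ : ContDiff ℝ 3 φ)
    (hua : u a = 0) (hub : u b = 0) (hu'b : deriv u b = 0)
    (hφa : φ a = 0) (hφb : φ b = 0) (hφ'a : deriv φ a = 0) :
    ∫ x in a..b, kdvbOp u x * φ x = ∫ x in a..b, u x * kdvbAdjointOp φ x := by
  have hlagrange : ∫ x in a..b, (kdvbOp u x * φ x - u x * kdvbAdjointOp φ x) = 0 := by
    rw [integral_eq_sub_of_hasDerivAt (fun x _ => hasDerivAt_kdvbConcomitant hu hφ x)
      (Continuous.intervalIntegrable (by fun_prop) a b)]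
    simp [iteratedDeriv_one, hua, hub, hu'b, hφa, hφb, hφ'a]
  rwa [integral_sub (Continuous.intervalIntegrable (by fun_prop) a b)
    (Continuous.intervalIntegrable (by fun_prop) a b), sub_eq_zero] at hlagrange

theorem integral_kdvbAdjointOp_mul_self_nonpos {a b : ℝ} (hab : a ≤ b) (hφ : ContDiff ℝ 3 φ)
    (hφa : φ a = 0) (hφb : φ b = 0) (hφ'a : deriv φ a = 0) :
    ∫ x in a..b, kdvbAdjointOp φ x * φ x ≤ 0 := by
  have hφ' : Continuous (iteratedDeriv 1 φ) := hφ.continuous_iteratedDeriv 1 (by norm_num)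
  have henergy := integral_eq_sub_of_hasDerivAt (fun x _ => hasDerivAt_kdvbAdjointEnergy hφ x)
    (Continuous.intervalIntegrable (by fun_prop) a b)
  rw [integral_add (Continuous.intervalIntegrable (by fun_prop) a b)
    (Continuous.intervalIntegrable (by fun_prop) a b)] at henergy
  simp only [iteratedDeriv_one, hφa, hφb, hφ'a] at henergy
  have hgradient : 0 ≤ ∫ x in a..b, deriv φ x ^ 2 :=
    integral_nonneg hab fun x _ => sq_nonneg _
  nlinarith [sq_nonneg (deriv φ b)]

end

/-- the adjoint of `A = ∂ₓₓ - ∂ₓₓₓ` (domain `u(-L)=u(L)=uₓ(L)=0`)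
in `L²(-L,L)` is `A* = ∂ₓₓ + ∂ₓₓₓ` with domain `φ(-L)=φ(L)=φₓ(-L)=0`
(expressed via the duality identity `(Au, φ) = (u, A*φ)`), and `A*` is dissipative. -/
theorem kdvb_adjoint_dissipative (L : ℝ) (hL : 0 < L) :
    (∀ u φ : ℝ → ℝ, ContDiff ℝ 3 u → ContDiff ℝ 3 φ →
      u (-L) = 0 → u L = 0 → deriv u L = 0 →
      φ (-L) = 0 → φ L = 0 → deriv φ (-L) = 0 →
      (∫ x in (-L)..L, (iteratedDeriv 2 u x - iteratedDeriv 3 u x) * φ x) =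
        ∫ x in (-L)..L, u x * (iteratedDeriv 2 φ x + iteratedDeriv 3 φ x)) ∧
    (∀ φ : ℝ → ℝ, ContDiff ℝ 3 φ →
      φ (-L) = 0 → φ L = 0 → deriv φ (-L) = 0 →
      (∫ x in (-L)..L, (iteratedDeriv 2 φ x + iteratedDeriv 3 φ x) * φ x) ≤ 0) :=
  ⟨fun _ _ hu hφ hua hub hu'b hφa hφb hφ'a =>
      integral_kdvbOp_mul_eq_integral_mul_kdvbAdjointOp hu hφ hua hub hu'b hφa hφb hφ'a,
    fun _ hφ hφa hφb hφ'a =>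
      integral_kdvbAdjointOp_mul_self_nonpos (by linarith) hφ hφa hφb hφ'a⟩
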